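/- Let H be a finitely generated projective cocommutative Hopf algebra over a commutative ring k, and A a commutative left H-module algebra (so A is a right H*-comodule algebra). If Σ_i a_i ⊗ f_i ∈ A ⊗ H* is an invertible grouplike element of the coring A⊗H*, then φ : H → A defined by φ(h) = Σ_i a_i f_i(h) is a normalized Sweedler 1-cocycle: φ(1_H) = 1_A and φ(hh') = Σ (h_{(1)}·φ(h')) φ(h_{(2)}) for all h, h' ∈ H. -/

import Mathlib

open TensorProduct

universe u

namespace SweedlerHarrison

variable {k H A : Type u} [CommRing k] [CommRing H] [HopfAlgebra k H]
  [CommRing A] [Algebra k A] [Module H A] [IsScalarTower k H A]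

/-- The canonical map `A ⊗ H^* → Hom(H, A)`, `Σ aᵢ ⊗ fᵢ ↦ (h ↦ Σ aᵢ fᵢ(h))`. -/
noncomputable def Phi : A ⊗[k] Module.Dual k H →ₗ[k] (H →ₗ[k] A) :=
  (dualTensorHom k H A) ∘ₗ (TensorProduct.comm k A (Module.Dual k H)).toLinearMap

/-- Convolution multiplication on `H^* = Dual k H`. -/
noncomputable def convD : Module.Dual k H ⊗[k] Module.Dual k H →ₗ[k] Module.Dual k H :=
  (LinearMap.dualMap (Coalgebra.comul (R := k) (A := H))) ∘ₗ TensorProduct.dualDistrib k H H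

/-- The multiplication of the commutative algebra `A ⊗ H^*`
(convolution in the second factor). -/
noncomputable def mulAD :
    (A ⊗[k] Module.Dual k H) ⊗[k] (A ⊗[k] Module.Dual k H) →ₗ[k] A ⊗[k] Module.Dual k H :=
  (TensorProduct.map (LinearMap.mul' k A) convD) ∘ₗ
    (TensorProduct.tensorTensorTensorComm k A (Module.Dual k H) A (Module.Dual k H)).toLinearMap

/-- Left multiplication by `x` in the algebra `A ⊗ H^*`. -/
noncomputable def mulADLeft (x : A ⊗[k] Module.Dual k H) :
    A ⊗[k] Module.Dual k H →ₗ[k] A ⊗[k] Module.Dual k H :=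
  mulAD ∘ₗ TensorProduct.mk k _ _ x

/-- The unit `1 ⊗ ε` of `A ⊗ H^*`. -/
noncomputable def oneAD : A ⊗[k] Module.Dual k H :=
  (1 : A) ⊗ₜ[k] (Bialgebra.counitAlgHom k H).toLinearMap

/-- `Σ aᵢ ⊗ Δ_{H^*}(fᵢ) ∈ A ⊗ (H ⊗ H)^*`:
the comultiplication of the coring `A ⊗ H^*` applied to `x`, where the comultiplication of
`H^*` (dual to the multiplication of `H`) is computed in `(H ⊗ H)^*`. -/
noncomputable def lhsGL : A ⊗[k] Module.Dual k H →ₗ[k] A ⊗[k] Module.Dual k (H ⊗[k] H) :=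
  LinearMap.lTensor A (LinearMap.dualMap (LinearMap.mul' k H))

/-- The comparison map `(A ⊗ H^*) ⊗ H^* → A ⊗ (H ⊗ H)^*`. -/
noncomputable def nuAD :
    (A ⊗[k] Module.Dual k H) ⊗[k] Module.Dual k H →ₗ[k] A ⊗[k] Module.Dual k (H ⊗[k] H) :=
  (LinearMap.lTensor A (TensorProduct.dualDistrib k H H)) ∘ₗ
    (TensorProduct.assoc k A (Module.Dual k H) (Module.Dual k H)).toLinearMap

/-- `x` is a grouplike element of the coring `A ⊗ H^*`, i.e. a normalized Harrison
1-cocycle: `Σ aᵢ ⊗ Δ(fᵢ) = Σ_{i,j} aᵢ(a_j)₍₀₎ ⊗ fᵢ(a_j)₍₁₎ ⊗ f_j` and `Σ aᵢ fᵢ(1) = 1`. -/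
noncomputable def IsGrouplikeAD (ρd : A →ₗ[k] A ⊗[k] Module.Dual k H)
    (x : A ⊗[k] Module.Dual k H) : Prop :=
  lhsGL x = nuAD ((LinearMap.rTensor (Module.Dual k H) (mulADLeft x))
      ((LinearMap.rTensor (Module.Dual k H) ρd) x)) ∧
    Phi x 1 = 1

/-- The Sweedler cocycle expression `Σ (h₍₁₎ · φ(h')) φ(h₍₂₎)`. -/
noncomputable def sweedlerRHS (φ : H →ₗ[k] A) (h h' : H) : A :=
  TensorProduct.lift
    (LinearMap.mk₂ k (fun h₁ h₂ => (h₁ • (φ h')) * (φ h₂))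
      (fun m m' n => by simp [add_smul, add_mul])
      (fun t m n => by simp [smul_assoc, smul_mul_assoc])
      (fun m n n' => by simp [mul_add])
      (fun t m n => by simp [mul_smul_comm]))
    (Coalgebra.comul (R := k) (A := H) h)

end SweedlerHarrison

/-!
Evaluating the grouplike identity at `h ⊗ h'` turns its left side into `φ(hh')`. On the right,
`Phi : A ⊗ H^* → Hom(H, A)` sends the product of `A ⊗ H^*` to the convolution product and the
coaction to the orbit maps `h ↦ h • a`, so the right side becomes the convolution
`(φ * (h ↦ h • φ(h')))(h) = Σ φ(h₍₁₎) (h₍₂₎ • φ(h'))`. Cocommutativity of `H` makes the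
convolution ring commutative, which puts the two factors in Sweedler's order.
-/

namespace SweedlerHarrison

open LinearMap WithConv

section DualTensorEval

variable {k A M : Type*} [CommRing k] [AddCommGroup A] [Module k A] [AddCommGroup M] [Module k M]

variable (M) in
noncomputable def dualTensorEval : A ⊗[k] Module.Dual k M →ₗ[k] (M →ₗ[k] A) :=
  dualTensorHom k M A ∘ₗ (TensorProduct.comm k A (Module.Dual k M)).toLinearMap

@[simp]
lemma dualTensorEval_tmul (a : A) (f : Module.Dual k M) (m : M) :
    dualTensorEval M (a ⊗ₜ[k] f) m = f m • a := by
  simp [dualTensorEval]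

end DualTensorEval

section OrbitMap

variable {k H A : Type*} [CommRing k] [Ring H] [Algebra k H] [AddCommGroup A] [Module k A]
  [Module H A] [IsScalarTower k H A]

variable (k H) in
noncomputable def orbitMap : A →ₗ[k] H →ₗ[k] A := (Algebra.lsmul k k A).toLinearMap.flip

@[simp]
lemma orbitMap_apply (a : A) (h : H) : orbitMap k H a h = h • a := rfl

end OrbitMap

variable {k H A : Type u} [CommRing k] [CommRing H] [HopfAlgebra k H] [CommRing A] [Algebra k A]

@[simp]
lemma Phi_tmul (a : A) (f : Module.Dual k H) (h : H) : Phi (a ⊗ₜ[k] f) h = f h • a := by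
  simp [Phi]

lemma toConv_Phi_mulAD (x y : A ⊗[k] Module.Dual k H) :
    toConv (Phi (mulAD (x ⊗ₜ[k] y))) = toConv (Phi x) * toConv (Phi y) := by
  induction x using TensorProduct.induction_on with
  | zero => simp
  | add x x' hx hx' => simp only [add_tmul, map_add, toConv_add, hx, hx', add_mul]
  | tmul a f =>
  induction y using TensorProduct.induction_on with
  | zero => simp
  | add y y' hy hy' => simp only [tmul_add, map_add, toConv_add, hy, hy', mul_add]
  | tmul b g =>
    have hconv : mul' k A ∘ₗ map (Phi (a ⊗ₜ[k] f)) (Phi (b ⊗ₜ[k] g))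
        = (dualDistrib k H H (f ⊗ₜ g)).smulRight (a * b) := by
      ext h₁ h₂
      simp [smul_smul, mul_comm]
    ext h
    rw [convMul_apply, ofConv_toConv, ofConv_toConv, ← comp_apply (mul' k A), hconv]
    simp [mulAD, convD]

lemma dualTensorEval_lhsGL (x : A ⊗[k] Module.Dual k H) (h h' : H) :
    dualTensorEval (H ⊗[k] H) (lhsGL x) (h ⊗ₜ[k] h') = Phi x (h * h') := by
  induction x using TensorProduct.induction_on with
  | zero => simp
  | add x x' hx hx' => simp only [map_add, LinearMap.add_apply, hx, hx']
  | tmul a f => simp [lhsGL]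

lemma dualTensorEval_nuAD (w : A ⊗[k] Module.Dual k H) (f : Module.Dual k H) (h h' : H) :
    dualTensorEval (H ⊗[k] H) (nuAD (w ⊗ₜ[k] f)) (h ⊗ₜ[k] h') = f h' • Phi w h := by
  induction w using TensorProduct.induction_on with
  | zero => simp
  | add w w' hw hw' => simp only [add_tmul, map_add, LinearMap.add_apply, hw, hw', smul_add]
  | tmul a g => simp [nuAD, smul_smul, mul_comm]

variable [Module H A] [IsScalarTower k H A]

lemma dualTensorEval_nuAD_coaction {ρd : A →ₗ[k] A ⊗[k] Module.Dual k H}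
    (hρd : ∀ (a : A) (h : H), Phi (ρd a) h = h • a) (x w : A ⊗[k] Module.Dual k H) (h h' : H) :
    dualTensorEval (H ⊗[k] H) (nuAD (rTensor _ (mulADLeft x) (rTensor _ ρd w))) (h ⊗ₜ[k] h')
      = (toConv (Phi x) * toConv (orbitMap k H (Phi w h'))) h := by
  induction w using TensorProduct.induction_on with
  | zero => simp
  | add w w' hw hw' =>
    simp only [map_add, LinearMap.add_apply, hw, hw', toConv_add, mul_add, ofConv_add]
  | tmul a f =>
    have hρ : Phi (ρd a) = orbitMap k H a := LinearMap.ext (hρd a)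
    rw [rTensor_tmul, rTensor_tmul, dualTensorEval_nuAD, Phi_tmul, map_smul, ← hρ, toConv_smul,
      mul_smul_comm, ← toConv_Phi_mulAD]
    rfl

lemma sweedlerRHS_eq_convMul (φ : H →ₗ[k] A) (h h' : H) :
    sweedlerRHS φ h h' = (toConv (orbitMap k H (φ h')) * toConv φ) h := by
  rw [sweedlerRHS, convMul_apply, ← comp_apply (mul' k A)]
  congr 1
  exact TensorProduct.ext' fun _ _ => rfl

end SweedlerHarrison

open SweedlerHarrison in
/-- let `H` be a finitely generated projective cocommutative Hopf algebra over
`k`, and `A` a commutative left `H`-module algebra (so that `A` is a right `H^*`-comodule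
algebra, with coaction `ρd` determined by `Σ a₍₀₎ a₍₁₎(h) = h • a`). If
`x = Σ aᵢ ⊗ fᵢ ∈ A ⊗ H^*` is an invertible grouplike element of the coring `A ⊗ H^*`, then
`φ : H → A`, `φ(h) = Σ aᵢ fᵢ(h)`, is a normalized Sweedler 1-cocycle: `φ(1) = 1` and
`φ(hh') = Σ (h₍₁₎ · φ(h')) φ(h₍₂₎)`. -/
theorem sweedler_cocycle_of_grouplike
    {k H A : Type u} [CommRing k] [CommRing H] [HopfAlgebra k H]
    (hcocomm : ∀ s : H, (TensorProduct.comm k H H) (Coalgebra.comul s) = Coalgebra.comul s)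
    [CommRing A] [Algebra k A] [Module H A] [IsScalarTower k H A]
    -- the associated coaction `ρd : A → A ⊗ H^*`
    (ρd : A →ₗ[k] A ⊗[k] Module.Dual k H)
    (hρd : ∀ (a : A) (h : H), Phi (ρd a) h = h • a)
    -- `x` is an invertible grouplike element of the coring `A ⊗ H^*`
    (x : A ⊗[k] Module.Dual k H)
    (hgl : IsGrouplikeAD ρd x) :
    Phi x 1 = 1 ∧ ∀ h h' : H, Phi x (h * h') = sweedlerRHS (Phi x) h h' := by
  have : Coalgebra.IsCocomm k H := ⟨LinearMap.ext hcocomm⟩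
  refine ⟨hgl.2, fun h h' => ?_⟩
  calc Phi x (h * h')
      = dualTensorEval (H ⊗[k] H) (lhsGL x) (h ⊗ₜ[k] h') := (dualTensorEval_lhsGL x h h').symm
    _ = (WithConv.toConv (Phi x) * WithConv.toConv (orbitMap k H (Phi x h'))) h := by
      rw [hgl.1, dualTensorEval_nuAD_coaction hρd]
    _ = sweedlerRHS (Phi x) h h' := by rw [mul_comm, sweedlerRHS_eq_convMul]
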